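/- For any cooperative game (N, ν) with n players, if S is a random subset of N distributed according to the CMCS distribution, then for every player i ∈ N the expectation E[Δ'_i(S)] equals the Shapley value φ_i; in other words, the extended marginal contribution of i to a CMCS-distributed coalition is an unbiased estimator of φ_i. -/

import Mathlib

/-!
Split the coalitions `T` according to whether `i ∈ T`. A coalition `T ∌ i` and its partner
`insert i T` have the same extended marginal contribution `ν (insert i T) - ν T`, so their CMCS
weights add up. By Pascal's rule and absorption,
`1/((n+1) C(n,k)) + 1/((n+1) C(n,k+1)) = 1/(n C(n-1,k))`, so the sum is exactly the
Shapley weight of a coalition of size `k = |T|`.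
-/

open Finset MeasureTheory

theorem Finset.sum_univ_eq_sum_powerset_erase {ι M : Type*} [Fintype ι] [DecidableEq ι]
    [AddCommMonoid M] (i : ι) (g : Finset ι → M) :
    ∑ T, g T = ∑ T ∈ (univ.erase i).powerset, (g T + g (insert i T)) := by
  rw [sum_add_distrib, ← sum_powerset_insert (notMem_erase i univ), insert_erase (mem_univ i),
    powerset_univ]

theorem MeasureTheory.integral_comp_eq_sum_measureReal_smul {α Ω E : Type*} [Fintype α]
    [NormedAddCommGroup E] [NormedSpace ℝ E] [CompleteSpace E] [MeasurableSpace Ω] (μ : Measure Ω)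
    [IsFiniteMeasure μ] (X : Ω → α) (hX : ∀ a, MeasurableSet {ω | X ω = a}) (f : α → E) :
    ∫ ω, f (X ω) ∂μ = ∑ a, μ.real {ω | X ω = a} • f a := by
  have h_indicator :
      (fun ω ↦ f (X ω)) = fun ω ↦ ∑ a, {ω | X ω = a}.indicator (fun _ ↦ f a) ω := by
    ext ω
    rw [sum_eq_single_of_mem (X ω) (mem_univ _)]
    · simp
    · exact fun a _ ha ↦ Set.indicator_of_notMem (Ne.symm ha) _
  rw [h_indicator, integral_finsetSum _ fun a _ ↦ (integrable_const _).indicator (hX a)]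
  exact sum_congr rfl fun a _ ↦ integral_indicator_const _ (hX a)

theorem Nat.inv_succ_mul_choose_add_inv_succ_mul_choose_succ {n k : ℕ} (hk : k < n) :
    (1 : ℝ) / ((n + 1) * n.choose k) + 1 / ((n + 1) * n.choose (k + 1))
      = 1 / (n * (n - 1).choose k) := by
  have hn : n - 1 + 1 = n := by omega
  have h_pascal : ((n : ℝ) + 1) * n.choose k = (n.choose k + n.choose (k + 1)) * (k + 1) := by
    exact_mod_cast (Nat.add_one_mul_choose_eq n k).trans (by rw [Nat.choose_succ_succ])
  have h_absorb : (n : ℝ) * (n - 1).choose k = n.choose (k + 1) * (k + 1) := by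
    exact_mod_cast hn ▸ Nat.add_one_mul_choose_eq (n - 1) k
  have ha : (0 : ℝ) < n.choose k := by exact_mod_cast Nat.choose_pos hk.le
  have hb : (0 : ℝ) < n.choose (k + 1) := by exact_mod_cast Nat.choose_pos hk
  have hc : (0 : ℝ) < (n - 1).choose k := by exact_mod_cast Nat.choose_pos (by omega)
  have hn' : (0 : ℝ) < n := by exact_mod_cast (Nat.zero_le k).trans_lt hk
  field_simp
  linear_combination (n.choose k + n.choose (k + 1) : ℝ) * h_absorb - n.choose (k + 1) * h_pascal

theorem cmcs_extended_marginal_contribution_unbiased_general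
    {ι : Type*} [Fintype ι] [DecidableEq ι]
    {Ω : Type*} [MeasurableSpace Ω] (ℙ : Measure Ω) [IsProbabilityMeasure ℙ]
    (ν : Finset ι → ℝ)
    (S : Ω → Finset ι)
    (hmeas : ∀ T : Finset ι, MeasurableSet {ω | S ω = T})
    (hlaw : ∀ T : Finset ι,
      ℙ {ω | S ω = T} = ENNReal.ofReal
        (1 / (((Fintype.card ι : ℝ) + 1) * ((Fintype.card ι).choose T.card))))
    (i : ι) :
    (∫ ω, (ν (insert i (S ω)) - ν ((S ω).erase i)) ∂ℙ)
      = ∑ T ∈ (Finset.univ.erase i).powerset,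
          (1 / ((Fintype.card ι : ℝ) * ((Fintype.card ι - 1).choose T.card))) *
            (ν (insert i T) - ν T) := by
  set n := Fintype.card ι
  have h_weight (T : Finset ι) : ℙ.real {ω | S ω = T} = 1 / ((n + 1) * n.choose T.card) := by
    rw [measureReal_def, hlaw, ENNReal.toReal_ofReal (by positivity)]
  rw [integral_comp_eq_sum_measureReal_smul ℙ S hmeas fun T ↦ ν (insert i T) - ν (T.erase i),
    sum_univ_eq_sum_powerset_erase i]
  refine sum_congr rfl fun T hT ↦ ?_
  have hiT : i ∉ T := fun h ↦ notMem_erase i univ (mem_powerset.mp hT h)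
  have hTn : T.card < n := by
    simpa using card_lt_card ((mem_powerset.mp hT).trans_ssubset (erase_ssubset (mem_univ i)))
  simp only [h_weight, smul_eq_mul, erase_eq_of_notMem hiT, insert_idem, erase_insert hiT,
    card_insert_of_notMem hiT]
  rw [← add_mul, Nat.inv_succ_mul_choose_add_inv_succ_mul_choose_succ hTn]

/-- If `S` is a random subset of `N` distributed according to the CMCS distribution
(`P(S = T) = 1/((n+1)·C(n,|T|))`), then for every player `i` the expectation of the
extended marginal contribution `Δ'_i(S) = ν(S ∪ {i}) − ν(S \ {i})` equals the Shapley
value `φ_i`, i.e. it is an unbiased estimator of `φ_i`. -/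
theorem cmcs_extended_marginal_contribution_unbiased
    {ι : Type*} [Fintype ι] [DecidableEq ι]
    {Ω : Type*} [MeasurableSpace Ω] (ℙ : Measure Ω) [IsProbabilityMeasure ℙ]
    (ν : Finset ι → ℝ) (hν : ν ∅ = 0)
    (S : Ω → Finset ι)
    (hmeas : ∀ T : Finset ι, MeasurableSet {ω | S ω = T})
    (hlaw : ∀ T : Finset ι,
      ℙ {ω | S ω = T} = ENNReal.ofReal
        (1 / (((Fintype.card ι : ℝ) + 1) * ((Fintype.card ι).choose T.card))))
    (i : ι) :
    (∫ ω, (ν (insert i (S ω)) - ν ((S ω).erase i)) ∂ℙ)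
      = ∑ T ∈ (Finset.univ.erase i).powerset,
          (1 / ((Fintype.card ι : ℝ) * ((Fintype.card ι - 1).choose T.card))) *
            (ν (insert i T) - ν T) :=
  cmcs_extended_marginal_contribution_unbiased_general ℙ ν S hmeas hlaw i
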